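/- arXiv:0903.4287 — 4 statements merged into one kernel-verified Lean document; each statement's English description precedes it below -/
import Mathlib

section
/- Let E be a real Banach space and A a unital real Banach algebra. Let τ : ℝ × E → A be twice continuously differentiable with τ(0,x) = 1 for all x and τ(t,x) invertible for all (t,x); set f(x) := ∂_t τ(t,x)|_{t=0}. Let Ā : E → L(E,A) be any map. Then for each x ∈ E and u ∈ E, the curve t ↦ τ(t,x)⁻¹ * (Ā(x)u) * τ(t,x) + τ(t,x)⁻¹ * (D_x τ(t,·)(x)u) is differentiable at t = 0 with derivative Df(x)u + (Ā(x)u) * f(x) − f(x) * (Ā(x)u), i.e. equal to the covariant differential (d^{Ā} f)(x)(u) of f with respect to Ā (with bracket the commutator). -/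
/-! Since `τ(0, ·) = 1`, the derivative of `t ↦ τₜ⁻¹` at `0` is `-f x`, so the product rule turns
the conjugation term into the commutator `(Ā x u) f x - f x (Ā x u)`. In the second term the
spatial derivative `D_x τ₀` vanishes, so only `∂ₜ (D_x τₜ)(x) u` survives, and by symmetry of the
second derivative of the `C²` map `τ` this mixed partial is `D f(x) u`. -/

open ContinuousLinearMap

section PartialDerivatives

variable {𝕜 E F : Type*} [NontriviallyNormedField 𝕜] [NormedAddCommGroup E] [NormedSpace 𝕜 E]
  [NormedAddCommGroup F] [NormedSpace 𝕜 F] {τ : 𝕜 × E → F}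

theorem fderiv_partial_right {s : 𝕜} {y : E} (hτ : DifferentiableAt 𝕜 τ (s, y)) :
    fderiv 𝕜 (fun y => τ (s, y)) y = (fderiv 𝕜 τ (s, y)).comp (inr 𝕜 𝕜 E) :=
  (hτ.hasFDerivAt.comp y (hasFDerivAt_prodMk_right s y)).fderiv

theorem deriv_partial_left {s : 𝕜} {y : E} (hτ : DifferentiableAt 𝕜 τ (s, y)) :
    deriv (fun s => τ (s, y)) s = fderiv 𝕜 τ (s, y) (1, 0) :=
  (hτ.hasFDerivAt.comp_hasDerivAt s ((hasDerivAt_id s).prodMk (hasDerivAt_const s y))).deriv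

theorem hasDerivAt_fderiv_partial_right [IsRCLikeNormedField 𝕜] (hτ : ContDiff 𝕜 2 τ)
    (t : 𝕜) (x u : E) :
    HasDerivAt (fun s => fderiv 𝕜 (fun y => τ (s, y)) x u)
      (fderiv 𝕜 (fun y => deriv (fun s => τ (s, y)) t) x u) t := by
  have hd : Differentiable 𝕜 τ := hτ.differentiable two_ne_zero
  set D2 := fderiv 𝕜 (fderiv 𝕜 τ) (t, x)
  have hD : HasFDerivAt (fderiv 𝕜 τ) D2 (t, x) :=
    ((hτ.fderiv_right one_add_one_eq_two.le).differentiable one_ne_zero _).hasFDerivAt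
  have hpx : (fun s => fderiv 𝕜 (fun y => τ (s, y)) x u) = fun s => fderiv 𝕜 τ (s, x) (0, u) :=
    funext fun s => by rw [fderiv_partial_right (hd (s, x))]; rfl
  have hpt : (fun y => deriv (fun s => τ (s, y)) t) = fun y => fderiv 𝕜 τ (t, y) (1, 0) :=
    funext fun y => deriv_partial_left (hd (t, y))
  rw [hpx, hpt]
  have hdt : HasDerivAt (fun s => fderiv 𝕜 τ (s, x) (0, u)) (D2 (1, 0) (0, u)) t := by
    have hc : HasDerivAt (fun s : 𝕜 => (s, x)) ((1 : 𝕜), (0 : E)) t :=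
      (hasDerivAt_id t).prodMk (hasDerivAt_const t x)
    have hDc := hD.comp_hasDerivAt t hc
    have h := hDc.clm_apply (hasDerivAt_const t ((0 : 𝕜), u))
    rwa [map_zero, add_zero] at h
  have hdx : fderiv 𝕜 (fun y => fderiv 𝕜 τ (t, y) (1, 0)) x u = D2 (0, u) (1, 0) := by
    have hy : HasFDerivAt (fun y => fderiv 𝕜 τ (t, y) (1, 0)) _ x :=
      (hD.comp x (hasFDerivAt_prodMk_right t x)).clm_apply (hasFDerivAt_const ((1 : 𝕜), (0 : E)) x)
    rw [hy.fderiv]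
    simp
  rw [hdx, second_derivative_symmetric (fun p => (hd p).hasFDerivAt) hD]
  exact hdt

end PartialDerivatives

section RingInverse

variable {𝕜 A : Type*} [NontriviallyNormedField 𝕜] [NormedRing A] [NormedAlgebra 𝕜 A]
  [HasSummableGeomSeries A] {γ β : 𝕜 → A} {v w : A} {t : 𝕜}

theorem HasDerivAt.ringInverse (hγ : HasDerivAt γ v t) {u : Aˣ} (hu : γ t = u) :
    HasDerivAt (fun s => Ring.inverse (γ s)) (-(↑u⁻¹ * v * ↑u⁻¹)) t := by
  have hinv := hasFDerivAt_ringInverse (𝕜 := 𝕜) u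
  rw [← hu] at hinv
  exact hinv.comp_hasDerivAt t hγ

theorem HasDerivAt.ringInverse_mul_mul_self_of_eq_one (hγ : HasDerivAt γ v t) (h1 : γ t = 1)
    (a : A) : HasDerivAt (fun s => Ring.inverse (γ s) * a * γ s) (a * v - v * a) t := by
  have hinv : HasDerivAt (fun s => Ring.inverse (γ s)) (-v) t := by
    simpa using hγ.ringInverse (u := 1) h1
  refine ((hinv.mul_const a).mul hγ).congr_deriv ?_
  rw [h1, Ring.inverse_one]
  noncomm_ring

theorem HasDerivAt.ringInverse_mul_of_eq_one_of_eq_zero (hγ : HasDerivAt γ v t) (h1 : γ t = 1)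
    (hβ : HasDerivAt β w t) (h0 : β t = 0) :
    HasDerivAt (fun s => Ring.inverse (γ s) * β s) w t := by
  refine ((hγ.ringInverse (u := 1) h1).mul hβ).congr_deriv ?_
  simp [h0, h1]

end RingInverse

theorem hasDerivAt_gauge_transformed_connection_general
    {E : Type*} [NormedAddCommGroup E] [NormedSpace ℝ E]
    {A : Type*} [NormedRing A] [NormedAlgebra ℝ A] [CompleteSpace A]
    (τ : ℝ × E → A) (hτ : ContDiff ℝ 2 τ)
    (hτ0 : ∀ x : E, τ (0, x) = 1)
    (Abar : E → (E →L[ℝ] A))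
    (f : E → A) (hf : ∀ x, f x = deriv (fun t : ℝ => τ (t, x)) 0) :
    ∀ (x u : E),
      HasDerivAt
        (fun t : ℝ => Ring.inverse (τ (t, x)) * (Abar x u) * τ (t, x)
          + Ring.inverse (τ (t, x)) * (fderiv ℝ (fun y => τ (t, y)) x u))
        (fderiv ℝ f x u + (Abar x u) * f x - f x * (Abar x u)) 0 := by
  intro x u
  have hτx : HasDerivAt (fun t => τ (t, x)) (f x) 0 := by
    rw [hf x, hasDerivAt_deriv_iff]
    exact (hτ.differentiable two_ne_zero (0, x)).comp 0
      (differentiableAt_id.prodMk (differentiableAt_const x))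
  have hβ := hasDerivAt_fderiv_partial_right hτ 0 x u
  rw [← funext hf] at hβ
  have hβ0 : fderiv ℝ (fun y => τ (0, y)) x u = 0 := by simp [hτ0]
  exact ((hτx.ringInverse_mul_mul_self_of_eq_one (hτ0 x) (Abar x u)).add
    (hτx.ringInverse_mul_of_eq_one_of_eq_zero (hτ0 x) hβ hβ0)).congr_deriv (by abel)

/-- **Derivative of the gauge-transformed connection:**
`(d/dt)|₀ ψₜ*𝒜 = d^𝒜 (σ⁻¹(ψ̇₀))` in a local trivialization. For a smooth family
`τ : ℝ × E → A` of invertible elements with `τ(0,·) = 1`, and `f := ∂ₜ τ|₀`, the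
curve `t ↦ τₜ⁻¹ (Ā u) τₜ + τₜ⁻¹ D_x τₜ(u)` has derivative at `t = 0` equal to the
covariant differential `(d^Ā f)(x)(u) = Df(x)u + (Ā x u) f x − f x (Ā x u)`. -/
theorem hasDerivAt_gauge_transformed_connection
    {E : Type*} [NormedAddCommGroup E] [NormedSpace ℝ E]
    {A : Type*} [NormedRing A] [NormedAlgebra ℝ A] [CompleteSpace A]
    (τ : ℝ × E → A) (hτ : ContDiff ℝ 2 τ)
    (hτ0 : ∀ x : E, τ (0, x) = 1) (hτunit : ∀ p : ℝ × E, IsUnit (τ p))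
    (Abar : E → (E →L[ℝ] A))
    (f : E → A) (hf : ∀ x, f x = deriv (fun t : ℝ => τ (t, x)) 0) :
    ∀ (x u : E),
      HasDerivAt
        (fun t : ℝ => Ring.inverse (τ (t, x)) * (Abar x u) * τ (t, x)
          + Ring.inverse (τ (t, x)) * (fderiv ℝ (fun y => τ (t, y)) x u))
        (fderiv ℝ f x u + (Abar x u) * f x - f x * (Abar x u)) 0 :=
  hasDerivAt_gauge_transformed_connection_general τ hτ hτ0 Abar f hf
end

section
/- Let E be a real Banach space and A a unital real Banach algebra. Let v, w : E → E and θ, ω : E → A be differentiable maps. Define vector fields X, Y on the Banach space E × A by X(x,g) := (v(x), θ(x) * g) and Y(x,g) := (w(x), ω(x) * g), and let the Jacobi–Lie bracket be [X,Y](p) := DY(p)(X(p)) − DX(p)(Y(p)). Then for all (x,g) ∈ E × A: −[X,Y](x,g) = ( Dv(x)(w(x)) − Dw(x)(v(x)), ( Dθ(x)(w(x)) − Dω(x)(v(x)) + θ(x)*ω(x) − ω(x)*θ(x) ) * g ). -/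
def rightInvariantField {E A : Type*} [Mul A] (v : E → E) (θ : E → A) (p : E × A) : E × A :=
  (v p.1, θ p.1 * p.2)

section RightInvariantField

variable {𝕜 : Type*} [NontriviallyNormedField 𝕜]
  {E : Type*} [NormedAddCommGroup E] [NormedSpace 𝕜 E]
  {A : Type*} [NormedRing A] [NormedAlgebra 𝕜 A]

theorem fderiv_rightInvariantField_apply {v : E → E} {θ : E → A} {x : E}
    (hv : DifferentiableAt 𝕜 v x) (hθ : DifferentiableAt 𝕜 θ x) (g : A) (a : E) (b : A) :
    fderiv 𝕜 (rightInvariantField v θ) (x, g) (a, b)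
      = (fderiv 𝕜 v x a, fderiv 𝕜 θ x a * g + θ x * b) := by
  have hF : HasFDerivAt (rightInvariantField v θ) _ (x, g) :=
    (hv.hasFDerivAt.comp (x, g) hasFDerivAt_fst).prodMk
      ((hθ.hasFDerivAt.comp (x, g) hasFDerivAt_fst).mul' hasFDerivAt_snd)
  rw [hF.fderiv]
  simp [add_comm]

end RightInvariantField

/-- **Lie bracket on the automorphism algebra of a trivial bundle (local form):**
for right-invariant vector fields `X(x,g) = (v x, θ x · g)` and `Y(x,g) = (w x, ω x · g)`
on `E × A`, the (left) Lie bracket, i.e. the negative of the Jacobi–Lie bracket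
`[X,Y](p) = DY(p)(X p) − DX(p)(Y p)`, is given by
`([v,w]_L, (dθ(w) − dω(v) + [θ,ω]) · g)`. -/
theorem left_lie_bracket_semidirect_local
    {E : Type*} [NormedAddCommGroup E] [NormedSpace ℝ E]
    {A : Type*} [NormedRing A] [NormedAlgebra ℝ A]
    (v w : E → E) (θ ω : E → A)
    (hv : Differentiable ℝ v) (hw : Differentiable ℝ w)
    (hθ : Differentiable ℝ θ) (hω : Differentiable ℝ ω)
    (X Y : E × A → E × A)
    (hX : ∀ x g, X (x, g) = (v x, θ x * g))
    (hY : ∀ x g, Y (x, g) = (w x, ω x * g)) :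
    ∀ (x : E) (g : A),
      -(fderiv ℝ Y (x, g) (X (x, g)) - fderiv ℝ X (x, g) (Y (x, g)))
        = (fderiv ℝ v x (w x) - fderiv ℝ w x (v x),
           (fderiv ℝ θ x (w x) - fderiv ℝ ω x (v x) + θ x * ω x - ω x * θ x) * g) := by
  intro x g
  obtain rfl : X = rightInvariantField v θ := funext fun p => hX p.1 p.2
  obtain rfl : Y = rightInvariantField w ω := funext fun p => hY p.1 p.2
  simp only [rightInvariantField,
    fderiv_rightInvariantField_apply (hv x) (hθ x),
    fderiv_rightInvariantField_apply (hw x) (hω x)]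
  ext
  · simp only [Prod.fst_sub, neg_sub]
  · simp only [Prod.snd_neg, Prod.snd_sub, mul_assoc, add_mul, sub_mul]
    abel
end

section
/- Let ℍ be the real quaternions, S³ := {q ∈ ℍ : ‖q‖ = 1} the unit sphere, k ∈ ℍ the quaternion imaginary unit with components (0,0,0,1), and Γ := {z ∈ ℍ : ∃ x y : ℝ, z = x + y·k ∧ x² + y² = 1} the circle subgroup. Define the Hopf map π : S³ → ℍ by π(q) := q * k * (star q), where star is quaternion conjugation. Then there is no homeomorphism φ : S³ → S³ such that (i) φ(q * z) = φ(q) * z for all q ∈ S³ and z ∈ Γ, and (ii) π(φ(q)) = −π(q) for all q ∈ S³. -/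
open Quaternion

/-- The quaternion imaginary unit `k`, with components `(0, 0, 0, 1)`. -/
def quatK : Quaternion ℝ := ⟨0, 0, 0, 1⟩

/-- The circle subgroup `Γ = {x + y·k : x² + y² = 1}` of the unit quaternions. -/
def circleGamma : Set (Quaternion ℝ) :=
  {z | ∃ x y : ℝ, z = (x : Quaternion ℝ) + y • quatK ∧ x ^ 2 + y ^ 2 = 1}

/-- The Hopf map `π(q) = q * k * q̄`. -/
noncomputable def hopfMap (q : Quaternion ℝ) : Quaternion ℝ := q * quatK * star q

/-!
The map `q ↦ q j` also covers the antipodal map, so for any `φ` as in the statement the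
quotient `ζ(q) = (q j)⁻¹ φ(q)` commutes with `k`, i.e. lies in `Γ ≅ S¹`. Since `j`
anticommutes with `k`, passing `z ∈ Γ` through `j` inverts it, and the equivariance of `φ`
becomes `ζ(q z) = z² ζ(q)`: along the fibre through `1`, `ζ` winds twice around `S¹`. But that
fibre is null-homotopic in `S³`, so by homotopy lifting its image under `ζ` cannot wind at all.
-/

open Metric ComplexConjugate unitInterval Real

theorem Path.Homotopic.eq_zero_of_comp_eq_circleExp {X : Type*} [TopologicalSpace X] {x : X}
    {γ : Path x x} (hγ : γ.Homotopic (Path.refl x)) {f : X → Circle} (hf : Continuous f)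
    {a : ℝ} (h : ∀ t, f (γ t) = Circle.exp (a * t) * f x) : a = 0 := by
  obtain ⟨θ, hθ⟩ := Circle.exp_surjective (f x)
  have hθ₀ : (γ.map hf) 0 = Circle.exp θ := by simp [hθ]
  have hθ₁ : ((Path.refl x).map hf) 0 = Circle.exp θ := by simp [hθ]
  have lift₀ : (⟨fun t : I ↦ a * t + θ, by fun_prop⟩ : C(I, ℝ)) =
      Circle.isCoveringMap_exp.liftPath (γ.map hf).toContinuousMap θ hθ₀ :=
    (IsCoveringMap.eq_liftPath_iff' ..).mpr
      ⟨funext fun t ↦ by simp [Circle.exp_add, hθ, h], by simp⟩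
  have lift₁ : ContinuousMap.const I θ =
      Circle.isCoveringMap_exp.liftPath ((Path.refl x).map hf).toContinuousMap θ hθ₁ :=
    (IsCoveringMap.eq_liftPath_iff' ..).mpr ⟨funext fun t ↦ by simp [hθ], rfl⟩
  have key := Circle.isCoveringMap_exp.liftPath_apply_one_eq_of_homotopicRel
    (hγ.map ⟨f, hf⟩) θ hθ₀ hθ₁
  rw [← lift₀, ← lift₁] at key
  simpa using key

noncomputable section

def quatJ : ℍ[ℝ] := ⟨0, 0, 1, 0⟩

@[simp] lemma quatK_re : quatK.re = 0 := rfl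
@[simp] lemma quatK_imI : quatK.imI = 0 := rfl
@[simp] lemma quatK_imJ : quatK.imJ = 0 := rfl
@[simp] lemma quatK_imK : quatK.imK = 1 := rfl
@[simp] lemma quatJ_re : quatJ.re = 0 := rfl
@[simp] lemma quatJ_imI : quatJ.imI = 0 := rfl
@[simp] lemma quatJ_imJ : quatJ.imJ = 1 := rfl
@[simp] lemma quatJ_imK : quatJ.imK = 0 := rfl

attribute [local simp] Quaternion.re_mul Quaternion.imI_mul Quaternion.imJ_mul Quaternion.imK_mul

lemma norm_quatJ : ‖quatJ‖ = 1 := by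
  rw [← sq_eq_sq₀ (norm_nonneg _) zero_le_one, sq, ← Quaternion.normSq_eq_norm_mul_self,
    Quaternion.normSq_def']
  simp

lemma star_mul_self_of_norm_eq_one {a : ℍ[ℝ]} (ha : ‖a‖ = 1) : star a * a = 1 := by
  rw [Quaternion.star_mul_self, Quaternion.normSq_eq_norm_mul_self, ha]; simp

def complexK : ℂ →ₐ[ℝ] ℍ[ℝ] := Complex.liftAux quatK (by ext <;> simp)

lemma complexK_apply (z : ℂ) : complexK z = (z.re : ℍ[ℝ]) + z.im • quatK :=
  Complex.liftAux_apply _ _ z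

lemma norm_complexK (z : ℂ) : ‖complexK z‖ = ‖z‖ := by
  rw [← sq_eq_sq₀ (norm_nonneg _) (norm_nonneg _), sq, ← Quaternion.normSq_eq_norm_mul_self,
    ← Complex.normSq_eq_norm_sq, Quaternion.normSq_def', Complex.normSq_apply]
  simp [complexK_apply, sq]

lemma complexK_mem_circleGamma (c : Circle) : complexK c ∈ circleGamma :=
  ⟨_, _, complexK_apply c, by simpa [Complex.normSq_apply, sq] using Circle.normSq_coe c⟩

lemma quatJ_mul_complexK (z : ℂ) : quatJ * complexK z = complexK (conj z) * quatJ := by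
  ext <;> simp [complexK_apply]

lemma star_complexK_mul_quatJ (z : ℂ) : star (complexK z * quatJ) = complexK z * star quatJ := by
  ext <;> simp [complexK_apply]

def projComplexK : ℍ[ℝ] →ₗ[ℝ] ℂ where
  toFun w := ⟨w.re, w.imK⟩
  map_add' _ _ := by apply Complex.ext <;> simp
  map_smul' _ _ := by apply Complex.ext <;> simp

lemma complexK_projComplexK_of_commute {w : ℍ[ℝ]} (h : Commute quatK w) :
    complexK (projComplexK w) = w := by
  have hI := congrArg QuaternionAlgebra.imI h.eq
  have hJ := congrArg QuaternionAlgebra.imJ h.eq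
  simp at hI hJ
  ext <;> simp [complexK_apply, projComplexK] <;> linarith

def circleK : Circle →* sphere (0 : ℍ[ℝ]) 1 where
  toFun c := ⟨complexK c, by simp [norm_complexK, Circle.norm_coe]⟩
  map_one' := Subtype.ext (by simp)
  map_mul' _ _ := Subtype.ext (by simp)

@[simp] lemma coe_circleK (c : Circle) : (circleK c : ℍ[ℝ]) = complexK c := rfl

lemma continuous_circleK : Continuous circleK :=
  (complexK.toLinearMap.continuous_of_finiteDimensional.comp continuous_subtype_val).subtype_mk _

def sphereJ : sphere (0 : ℍ[ℝ]) 1 := ⟨quatJ, mem_sphere_zero_iff_norm.2 norm_quatJ⟩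

lemma sphereJ_mul_circleK (c : Circle) : sphereJ * circleK c = circleK c⁻¹ * sphereJ :=
  Subtype.ext <| by
    rw [Metric.unitSphere.coe_mul, Metric.unitSphere.coe_mul, coe_circleK, coe_circleK,
      Circle.coe_inv_eq_conj]
    exact quatJ_mul_complexK c

lemma hopfMap_mul_quatJ (q : ℍ[ℝ]) : hopfMap (q * quatJ) = -hopfMap q := by
  have : quatJ * quatK * star quatJ = -quatK := by ext <;> simp
  calc hopfMap (q * quatJ) = q * (quatJ * quatK * star quatJ) * star q := by
        simp only [hopfMap, star_mul, mul_assoc]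
    _ = -hopfMap q := by rw [this, hopfMap]; noncomm_ring

lemma commute_quatK_star_mul_of_hopfMap_eq {a b : ℍ[ℝ]} (ha : ‖a‖ = 1) (hb : ‖b‖ = 1)
    (h : hopfMap a = hopfMap b) : Commute quatK (star a * b) :=
  calc quatK * (star a * b) = star a * a * quatK * (star a * b) := by
        rw [star_mul_self_of_norm_eq_one ha, one_mul]
    _ = star a * hopfMap a * b := by simp only [hopfMap, mul_assoc]
    _ = star a * hopfMap b * b := by rw [h]
    _ = star a * b * quatK * (star b * b) := by simp only [hopfMap, mul_assoc]
    _ = star a * b * quatK := by rw [star_mul_self_of_norm_eq_one hb, mul_one]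

lemma exists_continuous_circle_map_of_covers_antipodal
    {φ : sphere (0 : ℍ[ℝ]) 1 → sphere (0 : ℍ[ℝ]) 1} (hφ : Continuous φ)
    (hequiv : ∀ q c, φ (q * circleK c) = φ q * circleK c)
    (hcov : ∀ q, hopfMap (φ q) = -hopfMap q) :
    ∃ f : sphere (0 : ℍ[ℝ]) 1 → Circle,
      Continuous f ∧ ∀ q c, f (q * circleK c) = c ^ 2 * f q := by
  set Z : sphere (0 : ℍ[ℝ]) 1 → ℍ[ℝ] := fun q ↦ star (q * quatJ) * φ q
  have hZ : ∀ q, complexK (projComplexK (Z q)) = Z q := fun q ↦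
    complexK_projComplexK_of_commute <| commute_quatK_star_mul_of_hopfMap_eq
      (by simp [norm_mul, norm_quatJ]) (by simp) (by rw [hopfMap_mul_quatJ, hcov])
  have hZ_mul : ∀ q c, Z (q * circleK c) = complexK c * Z q * complexK c := fun q c ↦
    calc Z (q * circleK c)
        = star (complexK c * quatJ) * star (q : ℍ[ℝ]) * (φ q * complexK c) := by
          simp only [Z, hequiv, Metric.unitSphere.coe_mul, coe_circleK, star_mul, mul_assoc]
      _ = complexK c * Z q * complexK c := by
          rw [star_complexK_mul_quatJ]; simp only [Z, star_mul, mul_assoc]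
  refine ⟨fun q ↦ ⟨projComplexK (Z q), mem_sphere_zero_iff_norm.2 ?_⟩, ?_, fun q c ↦ ?_⟩
  · rw [← norm_complexK, hZ]
    simp [Z, norm_mul, norm_quatJ]
  · exact (projComplexK.continuous_of_finiteDimensional.comp (((continuous_subtype_val.mul
      continuous_const).star).mul (continuous_subtype_val.comp hφ))).subtype_mk _
  · apply Subtype.ext
    apply complexK.toRingHom.injective
    calc complexK (projComplexK (Z (q * circleK c)))
        = complexK c * complexK (projComplexK (Z q)) * complexK c := by rw [hZ, hZ_mul, hZ]
      _ = complexK ((c : ℂ) ^ 2 * projComplexK (Z q)) := by rw [← map_mul, ← map_mul]; ring_nf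

def fiberLoop : Path (1 : sphere (0 : ℍ[ℝ]) 1) 1 where
  toFun t := circleK (Circle.exp (2 * π * t))
  continuous_toFun := continuous_circleK.comp (Circle.exp.continuous.comp (by fun_prop))
  source' := by simp
  target' := by simp

/-- With `e(t) = exp(π t k)` and `r` a path from `1` to `j`, the homotopy is
`r(s) e(t) r(s)⁻¹ e(t)`: conjugation by `j` inverts `e(t)`, and `e(1) = -1` is central. -/
theorem fiberLoop_homotopic_refl : fiberLoop.Homotopic (Path.refl 1) := by
  have : PathConnectedSpace (sphere (0 : ℍ[ℝ]) 1) := isPathConnected_iff_pathConnectedSpace.1 <|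
    isPathConnected_sphere (by rw [Quaternion.rank_eq_four]; norm_num) 0 zero_le_one
  let r := (PathConnectedSpace.joined (1 : sphere (0 : ℍ[ℝ]) 1) sphereJ).somePath
  let e : ℝ → sphere (0 : ℍ[ℝ]) 1 := fun t ↦ circleK (Circle.exp (π * t))
  have he : Continuous e := continuous_circleK.comp (Circle.exp.continuous.comp (by fun_prop))
  have he₀ : e 0 = 1 := by simp [e]
  have he₁ : (e 1 : ℍ[ℝ]) = -1 := by simp [e, Circle.coe_exp, Complex.exp_pi_mul_I]
  exact ⟨{
    toFun := fun p ↦ r p.1 * e p.2 * (r p.1)⁻¹ * e p.2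
    continuous_toFun := by fun_prop
    map_zero_left := fun t ↦ by
      change r 0 * e t * (r 0)⁻¹ * e t = circleK (Circle.exp (2 * π * t))
      rw [r.source, one_mul, inv_one, mul_one, ← map_mul, ← Circle.exp_add]
      ring_nf
    map_one_left := fun t ↦ by
      change r 1 * e t * (r 1)⁻¹ * e t = 1
      rw [r.target, sphereJ_mul_circleK, mul_inv_cancel_right, ← map_mul, inv_mul_cancel, map_one]
    prop' := fun s t ht ↦ by
      change r s * e t * (r s)⁻¹ * e t = fiberLoop t
      rcases ht with rfl | rfl
      · rw [Set.Icc.coe_zero, he₀, mul_one, mul_one, mul_inv_cancel, fiberLoop.source]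
      · rw [Set.Icc.coe_one, fiberLoop.target]
        apply Subtype.ext
        have hr : (r s : ℍ[ℝ]) ≠ 0 := ne_zero_of_mem_unit_sphere (r s)
        simp only [Metric.unitSphere.coe_mul, Metric.unitSphere.coe_inv, he₁]
        rw [mul_neg_one, mul_neg_one, neg_mul, neg_neg, mul_inv_cancel₀ hr]
        rfl }⟩

theorem not_exists_continuous_circle_map_mul_circleK_eq_sq_mul :
    ¬ ∃ f : sphere (0 : ℍ[ℝ]) 1 → Circle,
      Continuous f ∧ ∀ q c, f (q * circleK c) = c ^ 2 * f q := by
  rintro ⟨f, hf, hf_mul⟩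
  have h := fiberLoop_homotopic_refl.eq_zero_of_comp_eq_circleExp hf (a := 4 * π) fun t ↦ by
    convert hf_mul 1 (Circle.exp (2 * π * t)) using 3
    · exact (one_mul _).symm
    · rw [← Circle.exp_natCast_mul]; ring_nf
  exact pi_ne_zero (by linarith)

end

/-- **No automorphism of the Hopf bundle covers the antipodal map.**
Let `S³` be the unit sphere of the real quaternions, with the circle subgroup `Γ` acting
by right multiplication, and `π(q) = q * k * q̄` the Hopf fibration onto `S²`. Then there
is no homeomorphism `φ` of `S³` that is `Γ`-equivariant and covers the antipodal map,
i.e. satisfies `φ(q·z) = φ(q)·z` for all `z ∈ Γ` and `π(φ(q)) = −π(q)`. -/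
theorem no_hopf_bundle_automorphism_covers_antipodal_map :
    ¬ ∃ φ : Metric.sphere (0 : Quaternion ℝ) 1 ≃ₜ Metric.sphere (0 : Quaternion ℝ) 1,
      (∀ (q : Metric.sphere (0 : Quaternion ℝ) 1) (z : Quaternion ℝ), z ∈ circleGamma →
        ∀ h : (q : Quaternion ℝ) * z ∈ Metric.sphere (0 : Quaternion ℝ) 1,
          (φ ⟨(q : Quaternion ℝ) * z, h⟩ : Quaternion ℝ) = (φ q : Quaternion ℝ) * z) ∧
      (∀ q : Metric.sphere (0 : Quaternion ℝ) 1,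
        hopfMap (φ q : Quaternion ℝ) = -hopfMap (q : Quaternion ℝ)) := by
  rintro ⟨φ, hequiv, hcov⟩
  exact not_exists_continuous_circle_map_mul_circleK_eq_sq_mul <|
    exists_continuous_circle_map_of_covers_antipodal φ.continuous
      (fun q c ↦ Subtype.ext (hequiv q _ (complexK_mem_circleGamma c) _)) hcov
end

section
/- (Euler–Poincaré reduction for semidirect products, right-invariant version, for the group of units of a Banach algebra.) Let A be a unital real Banach algebra with group of units Aˣ, V and F real Banach spaces, and R : A → L(V,V) a continuous unital algebra antihomomorphism (R(a*b) = R(b) ∘ R(a), R(1) = id). Fix a₀ ∈ V′ (continuous dual of V). Let L : A × A × F × F × V′ → ℝ be twice continuously differentiable and right-invariant: L(g*h, u*h, q, u_q, a ∘ R(h⁻¹)) = L(g, u, q, u_q, a) for all g ∈ A, u ∈ A, q, u_q ∈ F, a ∈ V′ and h ∈ Aˣ. Set l(ξ, q, u_q, a) := L(1, ξ, q, u_q, a). Let g : ℝ → Aˣ and q : ℝ → F be twice continuously differentiable curves, and define ξ(t) := ġ(t) * g(t)⁻¹ and a(t) := a₀ ∘ R(g(t)). Then the following are equivalent: (i) (g,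 q) satisfies the Euler–Lagrange equations for L_{a₀}: (d/dt)[D₂L(g(t), ġ(t), q(t), q̇(t), a₀)] = D₁L(g(t), ġ(t), q(t), q̇(t), a₀) in A′ and (d/dt)[D₄L(g(t), ġ(t), q(t), q̇(t), a₀)] = D₃L(g(t), ġ(t), q(t), q̇(t), a₀) in F′; (ii) the Euler–Poincaré equations with advected parameter hold: for every η ∈ A, (d/dt)[D₁l(ξ(t), q(t), q̇(t), a(t))(η)] = −D₁l(ξ(t), q(t), q̇(t), a(t))(ξ(t)*η − η*ξ(t)) + D₄l(ξ(t), q(t), q̇(t), a(t))(a(t) ∘ R(η)), together with the Euler–Lagrange equation (d/dt)[D₃l(ξ(t), q(t), q̇(t), a(t))] = D₂l(ξ(t), q(t), q̇(t), a(t)) in F′. -/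
/-!
Right invariance gives `L(g, ġ, q, q̇, a₀) = l(ġ g⁻¹, q, q̇, a₀ ∘ R(g))`, so the `q`-equations of
the two systems coincide and the momenta are related by `D₁l(ξ, …)(ζ) = D₂L(g, ġ, …)(ζ g)`.
Differentiating `h ↦ L(h, ξ h, q, q̇, a ∘ R(h⁻¹))`, which is constant on the open set of units, at
`h = 1` expresses `D₁L(1, ξ, …, a)` through `D₁l` and `D₄l`, and by invariance
`D₁L(g, ġ, …, a₀)(η g) = D₁L(1, ξ, …, a)(η)`. With the product rule for
`d/dt [D₂L(g, ġ, …)(η g)]`, the Euler–Lagrange equation tested on `η g` becomes the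
Euler–Poincaré equation tested on `η`, and `η ↦ η g` is onto because `g` is a unit.
-/

open ContinuousLinearMap Topology
open scoped Ring

def uncurry₅ {α β γ δ ε ζ : Type*} (f : α → β → γ → δ → ε → ζ) : α × β × γ × δ × ε → ζ :=
  fun p => f p.1 p.2.1 p.2.2.1 p.2.2.2.1 p.2.2.2.2

section Uncurry

variable {𝕜 : Type*} [NontriviallyNormedField 𝕜]
  {E₁ E₂ E₃ E₄ E₅ W : Type*} [NormedAddCommGroup E₁] [NormedSpace 𝕜 E₁]
  [NormedAddCommGroup E₂] [NormedSpace 𝕜 E₂] [NormedAddCommGroup E₃] [NormedSpace 𝕜 E₃]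
  [NormedAddCommGroup E₄] [NormedSpace 𝕜 E₄] [NormedAddCommGroup E₅] [NormedSpace 𝕜 E₅]
  [NormedAddCommGroup W] [NormedSpace 𝕜 W]
  {f : E₁ → E₂ → E₃ → E₄ → E₅ → W} {x₁ : E₁} {x₂ : E₂} {x₃ : E₃} {x₄ : E₄} {x₅ : E₅}

theorem hasFDerivAt_uncurry₅_slot₁ (hf : DifferentiableAt 𝕜 (uncurry₅ f) (x₁, x₂, x₃, x₄, x₅)) :
    HasFDerivAt (f · x₂ x₃ x₄ x₅)
      ((fderiv 𝕜 (uncurry₅ f) (x₁, x₂, x₃, x₄, x₅)).comp (inl 𝕜 E₁ _)) x₁ :=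
  (hf.hasFDerivAt.comp x₁ (hasFDerivAt_prodMk_left (𝕜 := 𝕜) x₁ (x₂, x₃, x₄, x₅)) :)

theorem hasFDerivAt_uncurry₅_slot₂ (hf : DifferentiableAt 𝕜 (uncurry₅ f) (x₁, x₂, x₃, x₄, x₅)) :
    HasFDerivAt (f x₁ · x₃ x₄ x₅)
      ((fderiv 𝕜 (uncurry₅ f) (x₁, x₂, x₃, x₄, x₅)).comp
        ((inr 𝕜 E₁ _).comp (inl 𝕜 E₂ _))) x₂ :=
  (hf.hasFDerivAt.comp x₂ ((hasFDerivAt_prodMk_right x₁ (x₂, x₃, x₄, x₅)).comp x₂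
    (hasFDerivAt_prodMk_left (𝕜 := 𝕜) x₂ (x₃, x₄, x₅))) :)

theorem hasFDerivAt_uncurry₅_slot₃ (hf : DifferentiableAt 𝕜 (uncurry₅ f) (x₁, x₂, x₃, x₄, x₅)) :
    HasFDerivAt (f x₁ x₂ · x₄ x₅)
      ((fderiv 𝕜 (uncurry₅ f) (x₁, x₂, x₃, x₄, x₅)).comp
        ((inr 𝕜 E₁ _).comp ((inr 𝕜 E₂ _).comp (inl 𝕜 E₃ _)))) x₃ :=
  (hf.hasFDerivAt.comp x₃ ((hasFDerivAt_prodMk_right x₁ (x₂, x₃, x₄, x₅)).comp x₃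
    ((hasFDerivAt_prodMk_right x₂ (x₃, x₄, x₅)).comp x₃
      (hasFDerivAt_prodMk_left (𝕜 := 𝕜) x₃ (x₄, x₅)))) :)

theorem hasFDerivAt_uncurry₅_slot₄ (hf : DifferentiableAt 𝕜 (uncurry₅ f) (x₁, x₂, x₃, x₄, x₅)) :
    HasFDerivAt (f x₁ x₂ x₃ · x₅)
      ((fderiv 𝕜 (uncurry₅ f) (x₁, x₂, x₃, x₄, x₅)).comp
        ((inr 𝕜 E₁ _).comp ((inr 𝕜 E₂ _).comp ((inr 𝕜 E₃ _).comp (inl 𝕜 E₄ _))))) x₄ :=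
  (hf.hasFDerivAt.comp x₄ ((hasFDerivAt_prodMk_right x₁ (x₂, x₃, x₄, x₅)).comp x₄
    ((hasFDerivAt_prodMk_right x₂ (x₃, x₄, x₅)).comp x₄
      ((hasFDerivAt_prodMk_right x₃ (x₄, x₅)).comp x₄
        (hasFDerivAt_prodMk_left (𝕜 := 𝕜) x₄ x₅)))) :)

theorem hasFDerivAt_uncurry₅_slot₅ (hf : DifferentiableAt 𝕜 (uncurry₅ f) (x₁, x₂, x₃, x₄, x₅)) :
    HasFDerivAt (f x₁ x₂ x₃ x₄ ·)
      ((fderiv 𝕜 (uncurry₅ f) (x₁, x₂, x₃, x₄, x₅)).comp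
        ((inr 𝕜 E₁ _).comp ((inr 𝕜 E₂ _).comp ((inr 𝕜 E₃ _).comp (inr 𝕜 E₄ _))))) x₅ :=
  (hf.hasFDerivAt.comp x₅ ((hasFDerivAt_prodMk_right x₁ (x₂, x₃, x₄, x₅)).comp x₅
    ((hasFDerivAt_prodMk_right x₂ (x₃, x₄, x₅)).comp x₅
      ((hasFDerivAt_prodMk_right x₃ (x₄, x₅)).comp x₅ (hasFDerivAt_prodMk_right x₄ x₅)))) :)

theorem fderiv_uncurry₅_apply (hf : DifferentiableAt 𝕜 (uncurry₅ f) (x₁, x₂, x₃, x₄, x₅))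
    (v₁ : E₁) (v₂ : E₂) (v₃ : E₃) (v₄ : E₄) (v₅ : E₅) :
    fderiv 𝕜 (uncurry₅ f) (x₁, x₂, x₃, x₄, x₅) (v₁, v₂, v₃, v₄, v₅) =
      fderiv 𝕜 (f · x₂ x₃ x₄ x₅) x₁ v₁ + fderiv 𝕜 (f x₁ · x₃ x₄ x₅) x₂ v₂ +
        fderiv 𝕜 (f x₁ x₂ · x₄ x₅) x₃ v₃ + fderiv 𝕜 (f x₁ x₂ x₃ · x₅) x₄ v₄ +
          fderiv 𝕜 (f x₁ x₂ x₃ x₄ ·) x₅ v₅ := by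
  simp only [(hasFDerivAt_uncurry₅_slot₁ hf).fderiv, (hasFDerivAt_uncurry₅_slot₂ hf).fderiv,
    (hasFDerivAt_uncurry₅_slot₃ hf).fderiv, (hasFDerivAt_uncurry₅_slot₄ hf).fderiv,
    (hasFDerivAt_uncurry₅_slot₅ hf).fderiv, coe_comp, Function.comp_apply, inl_apply, inr_apply,
    ← map_add, Prod.mk_add_mk, add_zero, zero_add]

end Uncurry

theorem fderiv_comp_mul_const_apply {𝕜 A W : Type*} [NontriviallyNormedField 𝕜]
    [NormedRing A] [NormedAlgebra 𝕜 A] [NormedAddCommGroup W] [NormedSpace 𝕜 W]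
    {f : A → W} {x c : A} (hf : DifferentiableAt 𝕜 f (x * c)) (v : A) :
    fderiv 𝕜 (fun y => f (y * c)) x v = fderiv 𝕜 f (x * c) (v * c) := by
  have h := hf.hasFDerivAt.comp x ((hasFDerivAt_id x).mul_const' c)
  rw [show (fun y => f (y * c)) = f ∘ (fun y => id y * c) from rfl, h.fderiv]
  simp

theorem hasFDerivAt_ringInverse_one {A : Type*} [NormedRing A] [NormedAlgebra ℝ A]
    [CompleteSpace A] :
    HasFDerivAt (Ring.inverse : A → A) (-ContinuousLinearMap.id ℝ A) 1 := by
  have h := hasFDerivAt_ringInverse (𝕜 := ℝ) (1 : Aˣ)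
  simp only [Units.val_one, inv_one] at h
  convert h using 1
  ext; simp

theorem deriv_eq_iff_forall_deriv_apply_mul {A : Type*} [NormedRing A] [NormedAlgebra ℝ A]
    {m : ℝ → A →L[ℝ] ℝ} {g : ℝ → A} {t : ℝ} {ξ : A} {Λ : A →L[ℝ] ℝ} {ρ : A → ℝ}
    (hm : DifferentiableAt ℝ m t) (hg : HasDerivAt g (ξ * g t) t) (hgt : IsUnit (g t))
    (hΛ : ∀ η, Λ (η * g t) = ρ η - m t (ξ * η * g t)) :
    deriv m t = Λ ↔
      ∀ η, deriv (fun s => m s (η * g s)) t = -m t ((ξ * η - η * ξ) * g t) + ρ η := by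
  have hderiv : ∀ η, deriv (fun s => m s (η * g s)) t = deriv m t (η * g t) + m t (η * ξ * g t) :=
    fun η => by simpa [mul_assoc] using (hm.hasDerivAt.clm_apply (hg.const_mul η)).deriv
  have hext : deriv m t = Λ ↔ ∀ η, deriv m t (η * g t) = Λ (η * g t) := by
    refine ⟨fun h η => h ▸ rfl, fun h => ContinuousLinearMap.ext fun δ => ?_⟩
    simpa [mul_assoc, Ring.inverse_mul_cancel _ hgt] using h (δ * (g t)⁻¹ʳ)
  rw [hext]
  refine forall_congr' fun η => ?_
  rw [hderiv, hΛ, sub_mul, map_sub]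
  constructor <;> intro h <;> linarith

section RightInvariant

variable {A : Type*} [NormedRing A] [NormedAlgebra ℝ A]
  {V : Type*} [NormedAddCommGroup V] [NormedSpace ℝ V] {F : Type*}

def IsRightInvariant (R : A →L[ℝ] V →L[ℝ] V) (L : A → A → F → F → (V →L[ℝ] ℝ) → ℝ) : Prop :=
  ∀ (g u : A) (q uq : F) (a : V →L[ℝ] ℝ) (h : Aˣ),
    L (g * ↑h) (u * ↑h) q uq (a.comp (R ↑h⁻¹)) = L g u q uq a

variable {R : A →L[ℝ] V →L[ℝ] V} {L : A → A → F → F → (V →L[ℝ] ℝ) → ℝ}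

namespace IsRightInvariant

theorem mul_inverse (hL : IsRightInvariant R L) {h : A} (hh : IsUnit h) (x u : A) (Q UQ : F)
    (b : V →L[ℝ] ℝ) : L (x * h⁻¹ʳ) (u * h⁻¹ʳ) Q UQ (b.comp (R h)) = L x u Q UQ b := by
  simpa [← Ring.inverse_of_isUnit hh] using hL x u Q UQ b hh.unit⁻¹

theorem one_mul_inverse (hL : IsRightInvariant R L) {h : A} (hh : IsUnit h) (u : A) (Q UQ : F)
    (b : V →L[ℝ] ℝ) : L 1 (u * h⁻¹ʳ) Q UQ (b.comp (R h)) = L h u Q UQ b := by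
  simpa [Ring.mul_inverse_cancel h hh] using hL.mul_inverse hh h u Q UQ b

theorem fderiv_snd_one_apply (hL : IsRightInvariant R L) {h : A} (hh : IsUnit h) {ξ : A}
    {Q UQ : F} {b : V →L[ℝ] ℝ} (hd : DifferentiableAt ℝ (L h · Q UQ b) (ξ * h)) (ζ : A) :
    fderiv ℝ (L 1 · Q UQ (b.comp (R h))) ξ ζ = fderiv ℝ (L h · Q UQ b) (ξ * h) (ζ * h) := by
  have hfun : (L 1 · Q UQ (b.comp (R h))) = fun u => L h (u * h) Q UQ b := by
    funext u
    rw [← hL.one_mul_inverse hh, mul_assoc, Ring.mul_inverse_cancel h hh, mul_one]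
  rw [hfun, fderiv_comp_mul_const_apply hd]

theorem fderiv_fst_apply (hL : IsRightInvariant R L) {h : A} (hh : IsUnit h) {u : A}
    {Q UQ : F} {b : V →L[ℝ] ℝ}
    (hd : DifferentiableAt ℝ (L · (u * h⁻¹ʳ) Q UQ (b.comp (R h))) 1) (δ : A) :
    fderiv ℝ (L · u Q UQ b) h δ =
      fderiv ℝ (L · (u * h⁻¹ʳ) Q UQ (b.comp (R h))) 1 (δ * h⁻¹ʳ) := by
  have hfun : (L · u Q UQ b) = fun x => L (x * h⁻¹ʳ) (u * h⁻¹ʳ) Q UQ (b.comp (R h)) :=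
    funext fun x => (hL.mul_inverse hh x u Q UQ b).symm
  have hd' : DifferentiableAt ℝ (L · (u * h⁻¹ʳ) Q UQ (b.comp (R h))) (h * h⁻¹ʳ) := by
    rwa [Ring.mul_inverse_cancel h hh]
  rw [hfun, fderiv_comp_mul_const_apply hd', Ring.mul_inverse_cancel h hh]

theorem fderiv_fst_one_apply [CompleteSpace A] [NormedAddCommGroup F] [NormedSpace ℝ F]
    (hL : IsRightInvariant R L) (hR1 : R 1 = ContinuousLinearMap.id ℝ V) {ξ : A} {Q UQ : F}
    {b : V →L[ℝ] ℝ} (hd : DifferentiableAt ℝ (uncurry₅ L) (1, ξ, Q, UQ, b)) (η : A) :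
    fderiv ℝ (L · ξ Q UQ b) 1 η =
      fderiv ℝ (L 1 ξ Q UQ ·) b (b.comp (R η)) - fderiv ℝ (L 1 · Q UQ b) ξ (ξ * η) := by
  -- `γ h` is the image of `(1, ξ, Q, UQ, b)` under the right action of `h`.
  set γ : A → A × A × F × F × (V →L[ℝ] ℝ) := fun h => (h, ξ * h, Q, UQ, b.comp (R h⁻¹ʳ))
  have hγ1 : γ 1 = (1, ξ, Q, UQ, b) := by simp [γ, hR1]
  have hconst : uncurry₅ L ∘ γ =ᶠ[𝓝 1] fun _ => L 1 ξ Q UQ b := by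
    filter_upwards [Units.isOpen.mem_nhds isUnit_one] with h hh
    simpa [γ, uncurry₅, Ring.inverse_of_isUnit hh] using hL 1 ξ Q UQ b hh.unit
  have hγ : HasFDerivAt γ ((ContinuousLinearMap.id ℝ A).prod
      ((ξ • ContinuousLinearMap.id ℝ A).prod ((0 : A →L[ℝ] F).prod ((0 : A →L[ℝ] F).prod
        (((compL ℝ V V ℝ b).comp R).comp (-ContinuousLinearMap.id ℝ A)))))) 1 :=
    (hasFDerivAt_id 1).prodMk (((hasFDerivAt_id 1).const_mul ξ).prodMk
      ((hasFDerivAt_const Q 1).prodMk ((hasFDerivAt_const UQ 1).prodMk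
        (((compL ℝ V V ℝ b).comp R).hasFDerivAt.comp 1 hasFDerivAt_ringInverse_one))))
  have hd' : DifferentiableAt ℝ (uncurry₅ L) (γ 1) := by rwa [hγ1]
  have hD := ((hasFDerivAt_const (L 1 ξ Q UQ b) (1 : A)).congr_of_eventuallyEq hconst).unique
    (hd'.hasFDerivAt.comp 1 hγ)
  have h0 : fderiv ℝ (uncurry₅ L) (1, ξ, Q, UQ, b) (η, ξ * η, 0, 0, -b.comp (R η)) = 0 := by
    simpa [hγ1] using congr($hD η).symm
  rw [fderiv_uncurry₅_apply hd] at h0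
  simp only [map_zero, add_zero, map_neg] at h0
  linarith

theorem euler_lagrange_iff_euler_poincare [CompleteSpace A] [NormedAddCommGroup F]
    [NormedSpace ℝ F] (hL : IsRightInvariant R L)
    (hR1 : R 1 = ContinuousLinearMap.id ℝ V) (hC : ContDiff ℝ 2 (uncurry₅ L)) {a₀ : V →L[ℝ] ℝ}
    {g : ℝ → A} (hgU : ∀ t, IsUnit (g t)) (hg : ContDiff ℝ 2 g) {q : ℝ → F}
    (hq : ContDiff ℝ 2 q) {ξ : ℝ → A} (hξ : ∀ t, ξ t = deriv g t * (g t)⁻¹ʳ)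
    {a : ℝ → V →L[ℝ] ℝ} (ha : ∀ t, a t = a₀.comp (R (g t))) (t : ℝ) :
    deriv (fun s => fderiv ℝ (L (g s) · (q s) (deriv q s) a₀) (deriv g s)) t
        = fderiv ℝ (L · (deriv g t) (q t) (deriv q t) a₀) (g t) ↔
      ∀ η : A, deriv (fun s => fderiv ℝ (L 1 · (q s) (deriv q s) (a s)) (ξ s) η) t
        = -fderiv ℝ (L 1 · (q t) (deriv q t) (a t)) (ξ t) (ξ t * η - η * ξ t)
          + fderiv ℝ (L 1 (ξ t) (q t) (deriv q t) ·) (a t) ((a t).comp (R η)) := by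
  have hd : Differentiable ℝ (uncurry₅ L) := hC.differentiable two_ne_zero
  have hξg : ∀ s, ξ s * g s = deriv g s := fun s => by
    rw [hξ, mul_assoc, Ring.inverse_mul_cancel _ (hgU s), mul_one]
  set m : ℝ → A →L[ℝ] ℝ := fun s => fderiv ℝ (L (g s) · (q s) (deriv q s) a₀) (deriv g s)
  have hm : Differentiable ℝ m := by
    have hc : Differentiable ℝ fun s => (g s, deriv g s, q s, deriv q s, a₀) := by
      have := hg.differentiable two_ne_zero
      have := hg.differentiable_deriv_two
      have := hq.differentiable two_ne_zero
      have := hq.differentiable_deriv_two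
      fun_prop
    have hm_eq : m = fun s => (fderiv ℝ (uncurry₅ L) (g s, deriv g s, q s, deriv q s, a₀)).comp
        ((inr ℝ A _).comp (inl ℝ A _)) :=
      funext fun s => (hasFDerivAt_uncurry₅_slot₂ (hd _)).fderiv
    rw [hm_eq]
    exact (((hC.fderiv_right one_add_one_eq_two.le).differentiable one_ne_zero).comp hc).clm_comp
      (differentiable_const _)
  have hμ : ∀ s ζ, fderiv ℝ (L 1 · (q s) (deriv q s) (a s)) (ξ s) ζ = m s (ζ * g s) := by
    intro s ζ
    have hdiff := (hasFDerivAt_uncurry₅_slot₂ (hd (g s, ξ s * g s, q s, deriv q s, a₀)))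
    rw [ha, hL.fderiv_snd_one_apply (hgU s) hdiff.differentiableAt, hξg]
  have hΛ : ∀ η, fderiv ℝ (L · (deriv g t) (q t) (deriv q t) a₀) (g t) (η * g t) =
      fderiv ℝ (L 1 (ξ t) (q t) (deriv q t) ·) (a t) ((a t).comp (R η)) - m t (ξ t * η * g t) := by
    intro η
    rw [hL.fderiv_fst_apply (hgU t) (hasFDerivAt_uncurry₅_slot₁ (hd _)).differentiableAt,
      mul_assoc, Ring.mul_inverse_cancel _ (hgU t), mul_one, ← hξ, ← ha,
      hL.fderiv_fst_one_apply hR1 (hd _), hμ]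
  have hg' : HasDerivAt g (ξ t * g t) t := hξg t ▸ (hg.differentiable two_ne_zero t).hasDerivAt
  simp only [hμ]
  exact deriv_eq_iff_forall_deriv_apply_mul (hm t) hg' (hgU t) hΛ

end IsRightInvariant

end RightInvariant

theorem euler_poincare_semidirect_product_units_general
    {A : Type*} [NormedRing A] [NormedAlgebra ℝ A] [CompleteSpace A]
    {V : Type*} [NormedAddCommGroup V] [NormedSpace ℝ V]
    {F : Type*} [NormedAddCommGroup F] [NormedSpace ℝ F]
    -- the continuous unital algebra antihomomorphism R : A → L(V,V)
    (R : A →L[ℝ] (V →L[ℝ] V))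
    (hR1 : R 1 = ContinuousLinearMap.id ℝ V)
    (a₀ : V →L[ℝ] ℝ)
    -- the Lagrangian, twice continuously differentiable and right-invariant
    (L : A → A → F → F → (V →L[ℝ] ℝ) → ℝ)
    (hL : ContDiff ℝ 2 (fun p : A × A × F × F × (V →L[ℝ] ℝ) =>
      L p.1 p.2.1 p.2.2.1 p.2.2.2.1 p.2.2.2.2))
    (hLinv : ∀ (g u : A) (q uq : F) (a : V →L[ℝ] ℝ) (h : Aˣ),
      L (g * ↑h) (u * ↑h) q uq (a.comp (R ↑h⁻¹)) = L g u q uq a)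
    -- the reduced Lagrangian
    (l : A → F → F → (V →L[ℝ] ℝ) → ℝ)
    (hl : ∀ ξ q uq a, l ξ q uq a = L 1 ξ q uq a)
    -- the curves
    (g : ℝ → A) (hgU : ∀ t, IsUnit (g t)) (hg : ContDiff ℝ 2 g)
    (q : ℝ → F) (hq : ContDiff ℝ 2 q)
    (ξ : ℝ → A) (hξ : ∀ t, ξ t = deriv g t * Ring.inverse (g t))
    (a : ℝ → (V →L[ℝ] ℝ)) (ha : ∀ t, a t = a₀.comp (R (g t))) :
    -- (i) Euler–Lagrange equations for L_{a₀}
    (∀ t : ℝ,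
      deriv (fun s => fderiv ℝ (fun u => L (g s) u (q s) (deriv q s) a₀) (deriv g s)) t
        = fderiv ℝ (fun g' => L g' (deriv g t) (q t) (deriv q t) a₀) (g t) ∧
      deriv (fun s => fderiv ℝ (fun uq => L (g s) (deriv g s) (q s) uq a₀) (deriv q s)) t
        = fderiv ℝ (fun q' => L (g t) (deriv g t) q' (deriv q t) a₀) (q t))
    ↔
    -- (ii) Euler–Poincaré equations with advected parameter, plus EL equations in q
    (∀ t : ℝ,
      (∀ η : A,
        deriv (fun s => (fderiv ℝ (fun ξ' => l ξ' (q s) (deriv q s) (a s)) (ξ s)) η) t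
          = -(fderiv ℝ (fun ξ' => l ξ' (q t) (deriv q t) (a t)) (ξ t)) (ξ t * η - η * ξ t)
            + (fderiv ℝ (fun a' => l (ξ t) (q t) (deriv q t) a') (a t)) ((a t).comp (R η))) ∧
      deriv (fun s => fderiv ℝ (fun uq => l (ξ s) (q s) uq (a s)) (deriv q s)) t
        = fderiv ℝ (fun q' => l (ξ t) q' (deriv q t) (a t)) (q t)) := by
  have hinv : IsRightInvariant R L := hLinv
  simp only [hl]
  refine forall_congr' fun t =>
    and_congr (hinv.euler_lagrange_iff_euler_poincare hR1 hL hgU hg hq hξ ha t) ?_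
  simp only [hξ, ha, hinv.one_mul_inverse, hgU]

/-- **Euler–Poincaré reduction for semidirect products (right-invariant version),
for the group of units of a Banach algebra.**  With `ξ = ġ g⁻¹` the right-trivialized
velocity and `a = a₀ ∘ R(g)` the advected parameter, a curve `(g, q)` satisfies the
Euler–Lagrange equations for `L_{a₀}` iff `(ξ, q, a)` satisfies the Euler–Poincaré
equations with advected parameter together with the Euler–Lagrange equations in `q`. -/
theorem euler_poincare_semidirect_product_units
    {A : Type*} [NormedRing A] [NormedAlgebra ℝ A] [CompleteSpace A]
    {V : Type*} [NormedAddCommGroup V] [NormedSpace ℝ V]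
    {F : Type*} [NormedAddCommGroup F] [NormedSpace ℝ F]
    -- the continuous unital algebra antihomomorphism R : A → L(V,V)
    (R : A →L[ℝ] (V →L[ℝ] V))
    (hR1 : R 1 = ContinuousLinearMap.id ℝ V)
    (hRmul : ∀ a b : A, R (a * b) = (R b).comp (R a))
    (a₀ : V →L[ℝ] ℝ)
    -- the Lagrangian, twice continuously differentiable and right-invariant
    (L : A → A → F → F → (V →L[ℝ] ℝ) → ℝ)
    (hL : ContDiff ℝ 2 (fun p : A × A × F × F × (V →L[ℝ] ℝ) =>
      L p.1 p.2.1 p.2.2.1 p.2.2.2.1 p.2.2.2.2))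
    (hLinv : ∀ (g u : A) (q uq : F) (a : V →L[ℝ] ℝ) (h : Aˣ),
      L (g * ↑h) (u * ↑h) q uq (a.comp (R ↑h⁻¹)) = L g u q uq a)
    -- the reduced Lagrangian
    (l : A → F → F → (V →L[ℝ] ℝ) → ℝ)
    (hl : ∀ ξ q uq a, l ξ q uq a = L 1 ξ q uq a)
    -- the curves
    (g : ℝ → A) (hgU : ∀ t, IsUnit (g t)) (hg : ContDiff ℝ 2 g)
    (q : ℝ → F) (hq : ContDiff ℝ 2 q)
    (ξ : ℝ → A) (hξ : ∀ t, ξ t = deriv g t * Ring.inverse (g t))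
    (a : ℝ → (V →L[ℝ] ℝ)) (ha : ∀ t, a t = a₀.comp (R (g t))) :
    -- (i) Euler–Lagrange equations for L_{a₀}
    (∀ t : ℝ,
      deriv (fun s => fderiv ℝ (fun u => L (g s) u (q s) (deriv q s) a₀) (deriv g s)) t
        = fderiv ℝ (fun g' => L g' (deriv g t) (q t) (deriv q t) a₀) (g t) ∧
      deriv (fun s => fderiv ℝ (fun uq => L (g s) (deriv g s) (q s) uq a₀) (deriv q s)) t
        = fderiv ℝ (fun q' => L (g t) (deriv g t) q' (deriv q t) a₀) (q t))
    ↔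
    -- (ii) Euler–Poincaré equations with advected parameter, plus EL equations in q
    (∀ t : ℝ,
      (∀ η : A,
        deriv (fun s => (fderiv ℝ (fun ξ' => l ξ' (q s) (deriv q s) (a s)) (ξ s)) η) t
          = -(fderiv ℝ (fun ξ' => l ξ' (q t) (deriv q t) (a t)) (ξ t)) (ξ t * η - η * ξ t)
            + (fderiv ℝ (fun a' => l (ξ t) (q t) (deriv q t) a') (a t)) ((a t).comp (R η))) ∧
      deriv (fun s => fderiv ℝ (fun uq => l (ξ s) (q s) uq (a s)) (deriv q s)) t
        = fderiv ℝ (fun q' => l (ξ t) q' (deriv q t) (a t)) (q t)) :=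
  euler_poincare_semidirect_product_units_general R hR1 a₀ L hL hLinv l hl g hgU hg q hq ξ hξ a ha
end
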